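/- Every element of the braid group B_3 on three strands can be written as a product σ_{c_1}^{ε_1} σ_{c_2}^{ε_2} ⋯ σ_{c_k}^{ε_k} for some k ≥ 0, where each ε_j ∈ {1, −1}, each c_j ∈ {1, 2}, and consecutive indices alternate: c_j ≠ c_{j+1} for all 1 ≤ j < k. -/

import Mathlib

/-- The braid relations on `n` generators (indexed by `Fin n`, where index `i`
stands for `σ_{i+1}`). For `n = 2` this is the single relation
`σ_1 σ_2 σ_1 = σ_2 σ_1 σ_2`. -/
def braidRels (n : ℕ) : Set (FreeGroup (Fin n)) :=
  {r | (∃ i j : Fin n, (i : ℕ) + 1 = (j : ℕ) ∧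
          r = .of i * .of j * .of i * (.of j * .of i * .of j)⁻¹) ∨
       (∃ i j : Fin n, (i : ℕ) + 2 ≤ (j : ℕ) ∧
          r = .of i * .of j * (.of j * .of i)⁻¹)}

/-- The braid group on `n` strands. -/
abbrev BraidGroup (n : ℕ) := PresentedGroup (braidRels (n - 1))

/-- The Artin generator `σ_i` of the braid group on `n` strands, for `1 ≤ i ≤ n − 1`
(and junk value `1` otherwise). -/
noncomputable def σ {n : ℕ} (i : ℕ) : BraidGroup n :=
  if h : 1 ≤ i ∧ i ≤ n - 1 then PresentedGroup.of ⟨i - 1, by omega⟩ else 1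

/-!
By the braid relation, a square `a ^ (±2)` of a generator equals the alternating word
`b^±1 a^±1 b^±1 a^∓1 b^∓1 a^±1`, which again ends in `a^±1`. So left multiplication of an
alternating word by a letter `a^±1` gives an alternating word: the letter is prepended, cancels
the first letter, or doubles it, and then the doubled letter is replaced by that word.
-/

section Braiding

variable {G : Type*} [Group G]

theorem inv_mul_inv_mul_inv_of_braid {a b : G} (h : a * b * a = b * a * b) :
    a⁻¹ * b⁻¹ * a⁻¹ = b⁻¹ * a⁻¹ * b⁻¹ := by
  simpa only [mul_inv_rev, mul_assoc] using congrArg (·⁻¹) h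

theorem mul_self_eq_of_braid {a b : G} (h : a * b * a = b * a * b) :
    a * a = b * a * b * a⁻¹ * b⁻¹ * a := by
  rw [← h]; group

theorem zpow_mul_self_eq_of_braid {a b : G} (h : a * b * a = b * a * b) (u : ℤˣ) :
    a ^ (u : ℤ) * a ^ (u : ℤ) =
      b ^ (u : ℤ) * a ^ (u : ℤ) * b ^ (u : ℤ) * a ^ ((-u : ℤˣ) : ℤ) * b ^ ((-u : ℤˣ) : ℤ) *
        a ^ (u : ℤ) := by
  rcases Int.units_eq_one_or u with rfl | rfl
  · simpa using mul_self_eq_of_braid h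
  · simpa using mul_self_eq_of_braid (inv_mul_inv_mul_inv_of_braid h)

end Braiding

section AlternatingWord

variable {G : Type*} [Group G] (s : Fin 2 → G)

def wordEval (w : List (Fin 2 × ℤˣ)) : G :=
  (w.map fun x => s x.1 ^ (x.2 : ℤ)).prod

@[simp]
theorem wordEval_nil : wordEval s [] = 1 := rfl

@[simp]
theorem wordEval_cons (x : Fin 2 × ℤˣ) (w : List (Fin 2 × ℤˣ)) :
    wordEval s (x :: w) = s x.1 ^ (x.2 : ℤ) * wordEval s w := by
  simp [wordEval]

def IsAlternating (w : List (Fin 2 × ℤˣ)) : Prop :=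
  w.IsChain fun x y => x.1 ≠ y.1

variable {s}

theorem exists_isAlternating_wordEval_eq_zpow_mul (hs : s 0 * s 1 * s 0 = s 1 * s 0 * s 1)
    (i : Fin 2) (u : ℤˣ) {w : List (Fin 2 × ℤˣ)} (hw : IsAlternating w) :
    ∃ w', IsAlternating w' ∧ wordEval s w' = s i ^ (u : ℤ) * wordEval s w := by
  obtain _ | ⟨⟨j, v⟩, rest⟩ := w
  · exact ⟨[(i, u)], List.isChain_singleton _, by simp⟩
  by_cases hij : i = j
  · subst hij
    by_cases hvu : v = u
    · subst hvu
      have hbraid : s i * s (i + 1) * s i = s (i + 1) * s i * s (i + 1) := by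
        fin_cases i
        exacts [hs, hs.symm]
      have hne : i ≠ i + 1 := by fin_cases i <;> decide
      refine ⟨[(i + 1, v), (i, v), (i + 1, v), (i, -v), (i + 1, -v), (i, v)] ++ rest, ?_, ?_⟩
      · simpa [IsAlternating, List.isChain_cons_cons, hne, hne.symm] using hw
      · simp only [List.cons_append, List.nil_append, wordEval_cons, ← mul_assoc,
          zpow_mul_self_eq_of_braid hbraid]
    · obtain rfl := Int.units_ne_iff_eq_neg.mp hvu
      exact ⟨rest, (List.isChain_cons.mp hw).2, by simp [← mul_assoc]⟩
  · exact ⟨(i, u) :: (j, v) :: rest, List.isChain_cons_cons.mpr ⟨hij, hw⟩, by simp⟩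

theorem exists_isAlternating_wordEval_eq (hs : s 0 * s 1 * s 0 = s 1 * s 0 * s 1) {g : G}
    (hg : g ∈ Subgroup.closure (Set.range s)) : ∃ w, IsAlternating w ∧ wordEval s w = g := by
  induction hg using Subgroup.closure_induction_left with
  | one => exact ⟨[], List.isChain_nil, rfl⟩
  | mul_left _ hx _ _ ih =>
    obtain ⟨i, rfl⟩ := hx
    obtain ⟨w, hw, rfl⟩ := ih
    simpa using exists_isAlternating_wordEval_eq_zpow_mul hs i 1 hw
  | inv_mul_cancel _ hx _ _ ih =>
    obtain ⟨i, rfl⟩ := hx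
    obtain ⟨w, hw, rfl⟩ := ih
    simpa using exists_isAlternating_wordEval_eq_zpow_mul hs i (-1) hw

end AlternatingWord

theorem braidGroup_three_braid_rel :
    (PresentedGroup.of 0 : BraidGroup 3) * .of 1 * .of 0 = .of 1 * .of 0 * .of 1 :=
  PresentedGroup.mk_eq_mk_of_mul_inv_mem (Or.inl ⟨0, 1, rfl, rfl⟩)

theorem σ_three_succ (i : Fin 2) : σ (n := 3) (i + 1) = PresentedGroup.of i := by
  rw [σ, dif_pos (by omega)]
  simp

theorem threeStrandBraid_alternating (g : BraidGroup 3) :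
    ∃ (k : ℕ) (c : Fin k → ℕ) (ε : Fin k → ℤ),
      (∀ j, c j = 1 ∨ c j = 2) ∧
      (∀ j, ε j = 1 ∨ ε j = -1) ∧
      (∀ (j : ℕ) (h : j + 1 < k), c ⟨j, by omega⟩ ≠ c ⟨j + 1, h⟩) ∧
      g = (List.ofFn fun j : Fin k => σ (n := 3) (c j) ^ ε j).prod := by
  obtain ⟨w, hw, rfl⟩ := exists_isAlternating_wordEval_eq braidGroup_three_braid_rel
    (PresentedGroup.closure_range_of _ ▸ Subgroup.mem_top g)
  refine ⟨w.length, fun j => (w[j].1 : ℕ) + 1, fun j => w[j].2, fun j => ?_,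
    fun j => Int.isUnit_eq_one_or (Units.isUnit _), fun j h => ?_, ?_⟩
  · dsimp only
    have := w[j].1.isLt
    omega
  · simpa [Fin.val_inj] using List.isChain_iff_getElem.mp hw j h
  · simp only [σ_three_succ, wordEval]
    exact congrArg List.prod (List.ofFn_getElem_eq_map w _).symm
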